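/- Let L, B > 0 and let u : ℝ² → ℝ be twice continuously differentiable on the closure of Ω = (0,L)×(−B,B), vanishing on the boundary of Ω (u(x,±B)=0 and u(0,y)=u(L,y)=0). Then 2∫_Ω (1+x) (∂_y² u) u² (∂_x u) dx dy = ∫_Ω u² (∂_y u)² dx dy − 2∫_Ω (1+x) u (∂_x u) (∂_y u)² dx dy. -/

import Mathlib

open MeasureTheory

/-- The open rectangle `Ω = (0,L) × (-B,B)`. -/
def omega10 (L B : ℝ) : Set (ℝ × ℝ) := Set.Ioo 0 L ×ˢ Set.Ioo (-B) B

/-- The closed rectangle `[0,L] × [-B,B]`, the closure of `Ω`. -/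
def closRect10 (L B : ℝ) : Set (ℝ × ℝ) := Set.Icc 0 L ×ˢ Set.Icc (-B) B

/-- Partial derivative of `u` in `x`, computed within the closed rectangle. -/
noncomputable def pdx10 (L B : ℝ) (u : ℝ × ℝ → ℝ) (z : ℝ × ℝ) : ℝ :=
  fderivWithin ℝ u (closRect10 L B) z (1, 0)

/-- Partial derivative of `u` in `y`, computed within the closed rectangle. -/
noncomputable def pdy10 (L B : ℝ) (u : ℝ × ℝ → ℝ) (z : ℝ × ℝ) : ℝ :=
  fderivWithin ℝ u (closRect10 L B) z (0, 1)

/-- Second partial derivative `u_{yy}`, computed within the closed rectangle. -/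
noncomputable def pdyy10 (L B : ℝ) (u : ℝ × ℝ → ℝ) (z : ℝ × ℝ) : ℝ :=
  iteratedFDerivWithin ℝ 2 u (closRect10 L B) z ![(0, 1), (0, 1)]

/-!
The integrand of the identity is the divergence of the field
`F = (-(1 + x) u² u_y², 2 (1 + x) u² u_x u_y)`: the mixed terms `± 2 (1 + x) u² u_y u_xy` cancel
by the symmetry of the second derivative. Since `u` vanishes on `∂Ω`, `F₁` vanishes on the sides
`x = 0, L` and `F₂` on the sides `y = ±B`, so the divergence theorem gives `∫_Ω div F = 0`.
-/

open Set Filter Topology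

section SecondDerivative

variable {𝕜 E F : Type*} [NontriviallyNormedField 𝕜] [NormedAddCommGroup E] [NormedSpace 𝕜 E]
  [NormedAddCommGroup F] [NormedSpace 𝕜 F] {u : E → F} {s : Set E} {z : E}

theorem ContDiffOn.hasFDerivAt_of_mem_nhds {n : WithTop ℕ∞} (hu : ContDiffOn 𝕜 n u s) (hn : n ≠ 0)
    (hs : s ∈ 𝓝 z) : HasFDerivAt u (fderivWithin 𝕜 u s z) z :=
  ((hu.differentiableOn hn z (mem_of_mem_nhds hs)).hasFDerivWithinAt).hasFDerivAt hs

theorem ContDiffOn.hasFDerivAt_fderivWithin_apply (hu : ContDiffOn 𝕜 2 u s)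
    (hs : UniqueDiffOn 𝕜 s) (hz : s ∈ 𝓝 z) (v : E) :
    HasFDerivAt (fun w => fderivWithin 𝕜 u s w v)
      ((fderivWithin 𝕜 (fderivWithin 𝕜 u s) s z).flip v) z := by
  have h := (hu.fderivWithin hs (m := 1) (by norm_num)).hasFDerivAt_of_mem_nhds one_ne_zero hz
  simpa using h.clm_apply (hasFDerivAt_const v z)

end SecondDerivative

section Rectangle

variable {E : Type*} [NormedAddCommGroup E] [NormedSpace ℝ E]

theorem Ioo_prod_Ioo_ae_eq_Icc (a b : ℝ × ℝ) :
    (Ioo a.1 b.1 ×ˢ Ioo a.2 b.2 : Set (ℝ × ℝ)) =ᵐ[volume] Icc a b := by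
  rw [Icc_prod_eq, Measure.volume_eq_prod]
  exact Measure.set_prod_ae_eq Ioo_ae_eq_Icc Ioo_ae_eq_Icc

theorem intervalIntegral.integral_eq_zero_of_eqOn_Icc {f : ℝ → E} {a b : ℝ} (hab : a ≤ b)
    (hf : EqOn f 0 (Icc a b)) : ∫ x in a..b, f x = 0 := by
  rw [intervalIntegral.integral_congr (g := 0) (by rwa [uIcc_of_le hab])]
  exact intervalIntegral.integral_zero

theorem integral_divergence_prod_Ioo_eq_zero [CompleteSpace E] {f g : ℝ × ℝ → E} {a b : ℝ × ℝ}
    (hab : a ≤ b)     (hf : ContinuousOn f (Icc a b)) (hg : ContinuousOn g (Icc a b))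
    (hf' : ∀ z ∈ Ioo a.1 b.1 ×ˢ Ioo a.2 b.2, DifferentiableAt ℝ f z)
    (hg' : ∀ z ∈ Ioo a.1 b.1 ×ˢ Ioo a.2 b.2, DifferentiableAt ℝ g z)
    (hi : IntegrableOn (fun z => fderiv ℝ f z (1, 0) + fderiv ℝ g z (0, 1))
      (Ioo a.1 b.1 ×ˢ Ioo a.2 b.2))
    (hf_side : ∀ y ∈ Icc a.2 b.2, f (a.1, y) = 0 ∧ f (b.1, y) = 0)
    (hg_side : ∀ x ∈ Icc a.1 b.1, g (x, a.2) = 0 ∧ g (x, b.2) = 0) :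
    ∫ z in Ioo a.1 b.1 ×ˢ Ioo a.2 b.2, (fderiv ℝ f z (1, 0) + fderiv ℝ g z (0, 1)) = 0 := by
  have hae := Ioo_prod_Ioo_ae_eq_Icc a b
  rw [setIntegral_congr_set hae,
    integral_divergence_prod_Icc_of_hasFDerivAt_off_countable_of_le f g _ _ a b hab ∅
      countable_empty hf hg (fun z hz => (hf' z (by simpa using hz)).hasFDerivAt)
      (fun z hz => (hg' z (by simpa using hz)).hasFDerivAt) (hi.congr_set_ae hae.symm)]
  rw [intervalIntegral.integral_eq_zero_of_eqOn_Icc hab.1 fun x hx => (hg_side x hx).2,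
    intervalIntegral.integral_eq_zero_of_eqOn_Icc hab.1 fun x hx => (hg_side x hx).1,
    intervalIntegral.integral_eq_zero_of_eqOn_Icc hab.2 fun y hy => (hf_side y hy).2,
    intervalIntegral.integral_eq_zero_of_eqOn_Icc hab.2 fun y hy => (hf_side y hy).1]
  simp

end Rectangle

section OpenRectangle

variable {L B : ℝ} {u : ℝ × ℝ → ℝ} {z : ℝ × ℝ}

theorem closRect10_eq_Icc : closRect10 L B = Icc (0, -B) (L, B) := by
  rw [closRect10, Icc_prod_Icc]

theorem omega10_subset_closRect10 : omega10 L B ⊆ closRect10 L B :=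
  prod_mono Ioo_subset_Icc_self Ioo_subset_Icc_self

theorem closRect10_mem_nhds (hz : z ∈ omega10 L B) : closRect10 L B ∈ 𝓝 z :=
  mem_of_superset ((isOpen_Ioo.prod isOpen_Ioo).mem_nhds hz) omega10_subset_closRect10

theorem uniqueDiffOn_closRect10 (hL : 0 < L) (hB : 0 < B) : UniqueDiffOn ℝ (closRect10 L B) :=
  (uniqueDiffOn_Icc hL).prod (uniqueDiffOn_Icc (by linarith))

theorem integrableOn_omega10 {f : ℝ × ℝ → ℝ} (hf : ContinuousOn f (closRect10 L B)) :
    IntegrableOn f (omega10 L B) := by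
  refine (hf.integrableOn_compact ?_).mono_set omega10_subset_closRect10
  exact isCompact_Icc.prod isCompact_Icc

theorem continuousOn_pdx10 (hu : ContDiffOn ℝ 2 u (closRect10 L B))
    (hs : UniqueDiffOn ℝ (closRect10 L B)) : ContinuousOn (pdx10 L B u) (closRect10 L B) :=
  (hu.continuousOn_fderivWithin hs one_le_two).clm_apply continuousOn_const

theorem continuousOn_pdy10 (hu : ContDiffOn ℝ 2 u (closRect10 L B))
    (hs : UniqueDiffOn ℝ (closRect10 L B)) : ContinuousOn (pdy10 L B u) (closRect10 L B) :=
  (hu.continuousOn_fderivWithin hs one_le_two).clm_apply continuousOn_const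

theorem continuousOn_pdyy10 (hu : ContDiffOn ℝ 2 u (closRect10 L B))
    (hs : UniqueDiffOn ℝ (closRect10 L B)) : ContinuousOn (pdyy10 L B u) (closRect10 L B) :=
  (continuous_eval_const _).comp_continuousOn (hu.continuousOn_iteratedFDerivWithin le_rfl hs)

noncomputable def fluxX (L B : ℝ) (u : ℝ × ℝ → ℝ) (z : ℝ × ℝ) : ℝ :=
  -((1 + z.1) * u z ^ 2 * pdy10 L B u z ^ 2)

noncomputable def fluxY (L B : ℝ) (u : ℝ × ℝ → ℝ) (z : ℝ × ℝ) : ℝ :=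
  2 * (1 + z.1) * u z ^ 2 * pdx10 L B u z * pdy10 L B u z

theorem continuousOn_fluxX (hu : ContDiffOn ℝ 2 u (closRect10 L B))
    (hs : UniqueDiffOn ℝ (closRect10 L B)) : ContinuousOn (fluxX L B u) (closRect10 L B) := by
  have := continuousOn_pdy10 hu hs
  have := hu.continuousOn
  unfold fluxX
  fun_prop

theorem continuousOn_fluxY (hu : ContDiffOn ℝ 2 u (closRect10 L B))
    (hs : UniqueDiffOn ℝ (closRect10 L B)) : ContinuousOn (fluxY L B u) (closRect10 L B) := by
  have := continuousOn_pdx10 hu hs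
  have := continuousOn_pdy10 hu hs
  have := hu.continuousOn
  unfold fluxY
  fun_prop

theorem differentiableAt_fluxX (hu : ContDiffOn ℝ 2 u (closRect10 L B))
    (hs : UniqueDiffOn ℝ (closRect10 L B)) (hz : z ∈ omega10 L B) :
    DifferentiableAt ℝ (fluxX L B u) z := by
  have := (hu.hasFDerivAt_of_mem_nhds two_ne_zero (closRect10_mem_nhds hz)).differentiableAt
  have := (hu.hasFDerivAt_fderivWithin_apply hs (closRect10_mem_nhds hz) (0, 1)).differentiableAt
  unfold fluxX pdy10
  fun_prop

theorem differentiableAt_fluxY (hu : ContDiffOn ℝ 2 u (closRect10 L B))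
    (hs : UniqueDiffOn ℝ (closRect10 L B)) (hz : z ∈ omega10 L B) :
    DifferentiableAt ℝ (fluxY L B u) z := by
  have := (hu.hasFDerivAt_of_mem_nhds two_ne_zero (closRect10_mem_nhds hz)).differentiableAt
  have := (hu.hasFDerivAt_fderivWithin_apply hs (closRect10_mem_nhds hz) (1, 0)).differentiableAt
  have := (hu.hasFDerivAt_fderivWithin_apply hs (closRect10_mem_nhds hz) (0, 1)).differentiableAt
  unfold fluxY pdx10 pdy10
  fun_prop

theorem fderiv_fluxX_add_fderiv_fluxY (hu : ContDiffOn ℝ 2 u (closRect10 L B))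
    (hs : UniqueDiffOn ℝ (closRect10 L B)) (hz : z ∈ omega10 L B) :
    fderiv ℝ (fluxX L B u) z (1, 0) + fderiv ℝ (fluxY L B u) z (0, 1)
      = 2 * ((1 + z.1) * pdyy10 L B u z * u z ^ 2 * pdx10 L B u z)
        + 2 * ((1 + z.1) * u z * pdx10 L B u z * pdy10 L B u z ^ 2)
        - u z ^ 2 * pdy10 L B u z ^ 2 := by
  have hnhds := closRect10_mem_nhds hz
  have hU := hu.hasFDerivAt_of_mem_nhds two_ne_zero hnhds
  have hP : HasFDerivAt (pdx10 L B u) _ z := hu.hasFDerivAt_fderivWithin_apply hs hnhds (1, 0)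
  have hQ : HasFDerivAt (pdy10 L B u) _ z := hu.hasFDerivAt_fderivWithin_apply hs hnhds (0, 1)
  have hA : HasFDerivAt (fun w : ℝ × ℝ => 1 + w.1) _ z :=
    (hasFDerivAt_fst (𝕜 := ℝ) (p := z)).const_add 1
  have hX : HasFDerivAt (fluxX L B u) _ z := ((hA.mul (hU.pow 2)).mul (hQ.pow 2)).neg
  have hY : HasFDerivAt (fluxY L B u) _ z := (((hA.const_mul 2).mul (hU.pow 2)).mul hP).mul hQ
  have hyy : pdyy10 L B u z
      = fderivWithin ℝ (fderivWithin ℝ u (closRect10 L B)) (closRect10 L B) z (0, 1) (0, 1) :=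
    iteratedFDerivWithin_two_apply' u hs (mem_of_mem_nhds hnhds) _ _
  have hxy := (hu.contDiffWithinAt (mem_of_mem_nhds hnhds)).isSymmSndFDerivWithinAt (by simp) hs
    (subset_closure (mem_interior_iff_mem_nhds.2 hnhds)) (mem_of_mem_nhds hnhds) (1, 0) (0, 1)
  rw [hX.fderiv, hY.fderiv, hyy]
  simp only [pdx10, pdy10, Pi.mul_apply, Nat.add_one_sub_one, pow_one, nsmul_eq_mul,
    Nat.cast_ofNat, add_apply, neg_apply, smul_apply, ContinuousLinearMap.coe_fst', smul_eq_mul,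
    ContinuousLinearMap.flip_apply, hxy]
  ring

end OpenRectangle

/-- **Integration-by-parts identity (5.44) of Estimate V**: for `u` twice continuously
differentiable on the closure of `Ω = (0,L) × (-B,B)` and vanishing on the boundary of `Ω`,
`2∫_Ω (1+x) u_{yy} u² u_x = ∫_Ω u² u_y² − 2∫_Ω (1+x) u u_x u_y²`. -/
theorem estimate_V_identity (L B : ℝ) (hL : 0 < L) (hB : 0 < B) (u : ℝ × ℝ → ℝ)
    (hu : ContDiffOn ℝ 2 u (closRect10 L B))
    (hbdy_y : ∀ x ∈ Set.Icc (0 : ℝ) L, u (x, -B) = 0 ∧ u (x, B) = 0)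
    (hbdy_x : ∀ y ∈ Set.Icc (-B) B, u ((0 : ℝ), y) = 0 ∧ u (L, y) = 0) :
    2 * (∫ z in omega10 L B,
          (1 + z.1) * pdyy10 L B u z * (u z) ^ 2 * pdx10 L B u z)
      = (∫ z in omega10 L B, (u z) ^ 2 * (pdy10 L B u z) ^ 2)
        - 2 * ∫ z in omega10 L B,
            (1 + z.1) * u z * pdx10 L B u z * (pdy10 L B u z) ^ 2 := by
  have hs := uniqueDiffOn_closRect10 hL hB
  have := continuousOn_pdx10 hu hs
  have := continuousOn_pdy10 hu hs
  have := continuousOn_pdyy10 hu hs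
  have := hu.continuousOn
  have h₁ : IntegrableOn (fun z => 2 * ((1 + z.1) * pdyy10 L B u z * u z ^ 2 * pdx10 L B u z))
      (omega10 L B) := integrableOn_omega10 (by fun_prop)
  have h₂ : IntegrableOn (fun z => 2 * ((1 + z.1) * u z * pdx10 L B u z * pdy10 L B u z ^ 2))
      (omega10 L B) := integrableOn_omega10 (by fun_prop)
  have h₃ : IntegrableOn (fun z => u z ^ 2 * pdy10 L B u z ^ 2) (omega10 L B) :=
    integrableOn_omega10 (by fun_prop)
  have hΩ : MeasurableSet (omega10 L B) := measurableSet_Ioo.prod measurableSet_Ioo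
  have hdiv := fun z (hz : z ∈ omega10 L B) => fderiv_fluxX_add_fderiv_fluxY hu hs hz
  have hzero : ∫ z in omega10 L B,
      (fderiv ℝ (fluxX L B u) z (1, 0) + fderiv ℝ (fluxY L B u) z (0, 1)) = 0 :=
    integral_divergence_prod_Ioo_eq_zero (a := (0, -B)) (b := (L, B)) ⟨hL.le, by linarith⟩
      (closRect10_eq_Icc ▸ continuousOn_fluxX hu hs) (closRect10_eq_Icc ▸ continuousOn_fluxY hu hs)
      (fun z hz => differentiableAt_fluxX hu hs hz) (fun z hz => differentiableAt_fluxY hu hs hz)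
      (IntegrableOn.congr_fun ((h₁.add h₂).sub h₃) (fun z hz => (hdiv z hz).symm) hΩ)
      (fun y hy => by simp [fluxX, hbdy_x y hy]) (fun x hx => by simp [fluxY, hbdy_y x hx])
  rw [setIntegral_congr_fun hΩ hdiv, integral_sub ?_ h₃, integral_add h₁ h₂,
    integral_const_mul, integral_const_mul] at hzero
  · linarith
  · exact h₁.add h₂
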